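/- Let a ∈ ℝ^n with ∑ a_i² = 1 and max_i |a_i| ≤ 1/(16√k) for k ∈ ℕ, k ≥ 1, and let x be uniform on {-1,1}^n. Then Pr[∑ a_i x_i > 4√k] > 2^{-999k}. -/

import Mathlib

open Finset

noncomputable section
open scoped Classical

/-- The ±1 value associated to a Boolean bit. -/
def sgn1 (b : Bool) : ℝ := if b then 1 else -1

/-- Probability of an event under the uniform measure on `{-1,1}^n`. -/
def cubePr (n : ℕ) (P : (Fin n → Bool) → Prop) : ℝ :=
  ((univ.filter P).card : ℝ) / 2 ^ n

/-- Expectation of a function under the uniform measure on `{-1,1}^n`. -/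
def cubeE (n : ℕ) (f : (Fin n → Bool) → ℝ) : ℝ := (∑ x, f x) / 2 ^ n

/-- The linear form `a · x = ∑ aᵢ xᵢ` on `{-1,1}^n`. -/
def lin (n : ℕ) (a : Fin n → ℝ) (x : Fin n → Bool) : ℝ := ∑ i, a i * sgn1 (x i)

/-- The halfspace `1{a · x > t}` as a 0/1-valued function. -/
def halfspace (n : ℕ) (a : Fin n → ℝ) (t : ℝ) (x : Fin n → Bool) : ℝ :=
  if t < lin n a x then 1 else 0

/-- The influence of coordinate `i` on `f`: the probability that flipping
coordinate `i` changes the value of `f`. -/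
def infl (n : ℕ) (i : Fin n) (f : (Fin n → Bool) → ℝ) : ℝ :=
  cubePr n (fun x => f x ≠ f (Function.update x i (!x i)))

/-- The degree-1 Fourier coefficient `f̂({i}) = E[f(x)·xᵢ]`. -/
def fCoeff (n : ℕ) (f : (Fin n → Bool) → ℝ) (i : Fin n) : ℝ :=
  cubeE n (fun x => f x * sgn1 (x i))

/-- The degree-1 Fourier weight `W¹(f) = ∑ᵢ f̂({i})²`. -/
def W1 (n : ℕ) (f : (Fin n → Bool) → ℝ) : ℝ := ∑ i, (fCoeff n f i) ^ 2

/-!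
Split the coordinates greedily into at most `64k` blocks `B` of weight
`w_B = ∑_{i ∈ B} aᵢ²` between `4/(256k)` and `9/(256k)`. The block sum `Y_B = ∑_{i ∈ B} aᵢxᵢ`
has `E[Y_B²] = w_B` and `E[Y_B⁴] ≤ 3 w_B²`, so Paley–Zygmund and the symmetry `x ↦ -x` give
`Pr[Y_B ≥ √(5 w_B / 8)] ≥ 3/128`. Blocks are independent, so with probability at least
`(3/128)^(64k) > 2^(-999k)` all these events occur, and then
`∑ aᵢxᵢ ≥ ∑_B √(5 w_B / 8) > ∑_B 4√k w_B = 4√k` since each `w_B ≤ 9/(256k)`.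
-/

theorem Finset.exists_subset_sum_mem_Icc {ι : Type*} (w : ι → ℝ) {c u : ℝ} (hc : 0 ≤ c)
    (hu : 0 ≤ u) {s : Finset ι} (hw : ∀ i ∈ s, w i ≤ u) (hs : c ≤ ∑ i ∈ s, w i) :
    ∃ t ⊆ s, c ≤ ∑ i ∈ t, w i ∧ ∑ i ∈ t, w i ≤ c + u := by
  classical
  induction s using Finset.induction_on with
  | empty => exact ⟨∅, subset_rfl, hs, by simp at hs ⊢; linarith⟩
  | @insert i s hi ih =>
    by_cases hc' : c ≤ ∑ j ∈ s, w j
    · obtain ⟨t, hts, ht⟩ := ih (fun j hj => hw j (mem_insert_of_mem hj)) hc'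
      exact ⟨t, hts.trans (subset_insert i s), ht⟩
    · refine ⟨insert i s, subset_rfl, hs, ?_⟩
      rw [sum_insert hi]
      linarith [hw i (mem_insert_self i s)]

theorem Finset.exists_finpartition_sum_mem_Icc {ι : Type*} [DecidableEq ι] (w : ι → ℝ)
    {c u : ℝ} (hc : 0 < c) (hu : 0 ≤ u) (s : Finset ι) (hw : ∀ i ∈ s, w i ≤ u)
    (hs : c ≤ ∑ i ∈ s, w i) :
    ∃ P : Finpartition s, ∀ t ∈ P.parts, c ≤ ∑ i ∈ t, w i ∧ ∑ i ∈ t, w i ≤ 2 * c + u := by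
  induction s using Finset.strongInduction with
  | H s ih =>
  have ne_empty {t : Finset ι} (ht : c ≤ ∑ i ∈ t, w i) : t ≠ ∅ := by
    rintro rfl; simp at ht; linarith
  by_cases hsmall : ∑ i ∈ s, w i ≤ 2 * c + u
  · exact ⟨Finpartition.indiscrete (ne_empty hs), by simp [hs, hsmall]⟩
  obtain ⟨t, hts, htc, htu⟩ := exists_subset_sum_mem_Icc w hc.le hu hw hs
  have hrest : ∑ i ∈ s \ t, w i = ∑ i ∈ s, w i - ∑ i ∈ t, w i := by
    rw [sum_sdiff_eq_sub hts]
  obtain ⟨P, hP⟩ := ih (s \ t) (sdiff_ssubset hts (nonempty_iff_ne_empty.2 (ne_empty htc)))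
    (fun i hi => hw i (mem_sdiff.1 hi).1) (by linarith)
  refine ⟨P.extend (ne_empty htc) sdiff_disjoint (sdiff_union_of_subset hts), ?_⟩
  simp only [Finpartition.extend_parts, forall_mem_insert]
  exact ⟨⟨htc, by linarith⟩, hP⟩

theorem Finpartition.sum_sum_parts {ι M : Type*} [DecidableEq ι] [AddCommMonoid M]
    {s : Finset ι} (P : Finpartition s) (f : ι → M) :
    ∑ t ∈ P.parts, ∑ i ∈ t, f i = ∑ i ∈ s, f i := by
  simpa [P.biUnion_parts] using (Finset.sum_biUnion (f := f) P.disjoint).symm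

theorem Finpartition.card_parts_mul_le_sum {ι : Type*} [DecidableEq ι] {s : Finset ι}
    (P : Finpartition s) (w : ι → ℝ) {c : ℝ} (hc : ∀ t ∈ P.parts, c ≤ ∑ i ∈ t, w i) :
    #P.parts * c ≤ ∑ i ∈ s, w i := by
  rw [← P.sum_sum_parts, ← nsmul_eq_mul, ← Finset.sum_const]
  exact Finset.sum_le_sum hc

/-- Paley–Zygmund inequality for the counting measure. -/
theorem sq_sum_sub_le_card_mul_sum_sq {α : Type*} [Fintype α] (f : α → ℝ) {t : ℝ}
    (ht : 0 ≤ t) (hf : t * Fintype.card α ≤ ∑ x, f x) :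
    (∑ x, f x - t * Fintype.card α) ^ 2 ≤ #{x | t ≤ f x} * ∑ x, f x ^ 2 := by
  have hlow : ∑ x ∈ {x | ¬ t ≤ f x}, f x ≤ t * Fintype.card α :=
    calc ∑ x ∈ {x | ¬ t ≤ f x}, f x ≤ ∑ x ∈ {x | ¬ t ≤ f x}, t :=
          sum_le_sum fun x hx => (not_le.1 (mem_filter.1 hx).2).le
      _ = t * #{x | ¬ t ≤ f x} := by rw [sum_const, nsmul_eq_mul, mul_comm]
      _ ≤ t * Fintype.card α := by gcongr; exact card_le_univ _
  have hhigh : ∑ x, f x - t * Fintype.card α ≤ ∑ x ∈ {x | t ≤ f x}, f x := by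
    linarith [sum_filter_add_sum_filter_not univ (fun x => t ≤ f x) f]
  calc (∑ x, f x - t * Fintype.card α) ^ 2 ≤ (∑ x ∈ {x | t ≤ f x}, f x) ^ 2 :=
        pow_le_pow_left₀ (by linarith) hhigh 2
    _ ≤ #{x | t ≤ f x} * ∑ x ∈ {x | t ≤ f x}, f x ^ 2 := sq_sum_le_card_mul_sum_sq
    _ ≤ #{x | t ≤ f x} * ∑ x, f x ^ 2 := mul_le_mul_of_nonneg_left
        (sum_le_sum_of_subset_of_nonneg (subset_univ _) fun x _ _ => sq_nonneg _) (by positivity)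

theorem card_sq_le_sq_le_two_mul_card {α : Type*} [Fintype α] {Y : α → ℝ} {σ : α → α}
    (hσ : Function.Involutive σ) (hY : ∀ x, Y (σ x) = -Y x) {s : ℝ} (hs : 0 ≤ s) :
    #{x | s ^ 2 ≤ Y x ^ 2} ≤ 2 * #{x | s ≤ Y x} := by
  have hneg : #{x | Y x ≤ -s} = #{x | s ≤ Y x} :=
    card_nbij' σ σ (fun x hx => by simp_all; linarith) (fun x hx => by simp_all)
      (fun x _ => hσ x) (fun x _ => hσ x)
  calc #{x | s ^ 2 ≤ Y x ^ 2}
        ≤ #(({x | s ≤ Y x} : Finset α) ∪ ({x | Y x ≤ -s} : Finset α)) := by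
        refine card_le_card fun x hx => ?_
        simp only [mem_filter, mem_univ, true_and, mem_union] at hx ⊢
        exact (le_abs'.1 (abs_of_nonneg hs ▸ sq_le_sq.1 hx)).symm
    _ ≤ #{x | s ≤ Y x} + #{x | Y x ≤ -s} := card_union_le _ _
    _ = 2 * #{x | s ≤ Y x} := by rw [hneg, two_mul]

theorem sum_eq_zero_of_involutive_of_neg {α : Type*} [Fintype α] {σ : α → α}
    (hσ : Function.Involutive σ) {f : α → ℝ} (hf : ∀ x, f (σ x) = -f x) : ∑ x, f x = 0 := by
  have h := Fintype.sum_bijective σ hσ.bijective (f ∘ σ) f fun _ => rfl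
  simp only [Function.comp_apply, hf, sum_neg_distrib] at h
  linarith

theorem sgn1_sq (b : Bool) : sgn1 b ^ 2 = 1 := by cases b <;> simp [sgn1]

theorem sgn1_not (b : Bool) : sgn1 (!b) = -sgn1 b := by cases b <;> simp [sgn1]

section Cube

variable {n : ℕ}

theorem cubePr_eq_card_div (p : (Fin n → Bool) → Prop) [DecidablePred p] :
    cubePr n p = #{x | p x} / 2 ^ n := by
  unfold cubePr
  congr

theorem cubePr_mono {p q : (Fin n → Bool) → Prop} (h : ∀ x, p x → q x) :
    cubePr n p ≤ cubePr n q := by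
  unfold cubePr
  gcongr
  exact h _

def signSum (B : Finset (Fin n)) (a : Fin n → ℝ) (x : Fin n → Bool) : ℝ :=
  ∑ i ∈ B, a i * sgn1 (x i)

def flipOn (B : Finset (Fin n)) (x : Fin n → Bool) : Fin n → Bool :=
  fun i => if i ∈ B then !x i else x i

theorem flipOn_involutive (B : Finset (Fin n)) : Function.Involutive (flipOn B) := by
  intro x
  funext i
  by_cases h : i ∈ B <;> simp [flipOn, h]

theorem dependsOn_signSum (B : Finset (Fin n)) (a : Fin n → ℝ) :
    DependsOn (signSum B a) B :=
  fun x y h => sum_congr rfl fun i hi => by rw [h i hi]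

theorem signSum_flipOn (B : Finset (Fin n)) (a : Fin n → ℝ) (x : Fin n → Bool) :
    signSum B a (flipOn B x) = -signSum B a x := by
  rw [signSum, signSum, ← sum_neg_distrib]
  exact sum_congr rfl fun i hi => by simp [flipOn, hi, sgn1_not]

theorem signSum_insert {B : Finset (Fin n)} {i : Fin n} (hi : i ∉ B) (a : Fin n → ℝ)
    (x : Fin n → Bool) : signSum (insert i B) a x = a i * sgn1 (x i) + signSum B a x :=
  sum_insert hi

/-- Flipping coordinate `i` changes the sign of the summand and fixes the rest. -/
theorem sum_sgn1_mul_signSum_pow_eq_zero {B : Finset (Fin n)} {i : Fin n} (hi : i ∉ B)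
    (a : Fin n → ℝ) (k : ℕ) : ∑ x, sgn1 (x i) * signSum B a x ^ k = 0 := by
  refine sum_eq_zero_of_involutive_of_neg (flipOn_involutive {i}) fun x => ?_
  have hfix : signSum B a (flipOn {i} x) = signSum B a x :=
    dependsOn_signSum B a fun j hj => by simp [flipOn, (ne_of_mem_of_not_mem hj hi)]
  simp [hfix, flipOn, sgn1_not]

theorem sum_const_cube (c : ℝ) : ∑ _x : Fin n → Bool, c = 2 ^ n * c := by
  simp [sum_const]

theorem sum_signSum_sq (B : Finset (Fin n)) (a : Fin n → ℝ) :
    ∑ x, signSum B a x ^ 2 = 2 ^ n * ∑ i ∈ B, a i ^ 2 := by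
  induction B using Finset.induction_on with
  | empty => simp [signSum]
  | @insert i B hi ih =>
    have expand : ∀ x, signSum (insert i B) a x ^ 2 =
        a i ^ 2 + 2 * a i * (sgn1 (x i) * signSum B a x) + signSum B a x ^ 2 := fun x => by
      rw [signSum_insert hi]
      linear_combination a i ^ 2 * sgn1_sq (x i)
    simp only [expand, sum_add_distrib, ← mul_sum, sum_const_cube, ih, sum_insert hi]
    rw [show ∑ x, sgn1 (x i) * signSum B a x = 0 by
      simpa using sum_sgn1_mul_signSum_pow_eq_zero hi a 1]
    ring

theorem sum_signSum_pow_four_le (B : Finset (Fin n)) (a : Fin n → ℝ) :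
    ∑ x, signSum B a x ^ 4 ≤ 3 * 2 ^ n * (∑ i ∈ B, a i ^ 2) ^ 2 := by
  induction B using Finset.induction_on with
  | empty => simp [signSum]
  | @insert i B hi ih =>
    have expand : ∀ x, signSum (insert i B) a x ^ 4 =
        a i ^ 4 + 4 * a i ^ 3 * (sgn1 (x i) * signSum B a x ^ 1)
          + 6 * a i ^ 2 * signSum B a x ^ 2 + 4 * a i * (sgn1 (x i) * signSum B a x ^ 3)
          + signSum B a x ^ 4 := fun x => by
      rw [signSum_insert hi]
      linear_combination (a i ^ 4 * (sgn1 (x i) ^ 2 + 1)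
        + 4 * a i ^ 3 * signSum B a x * sgn1 (x i) + 6 * a i ^ 2 * signSum B a x ^ 2)
          * sgn1_sq (x i)
    simp only [expand, sum_add_distrib, ← mul_sum, sum_const_cube, sum_signSum_sq,
      sum_sgn1_mul_signSum_pow_eq_zero hi, sum_insert hi]
    nlinarith [sq_nonneg (a i ^ 2), sum_nonneg fun j (_ : j ∈ B) => sq_nonneg (a j),
      pow_pos (two_pos (α := ℝ)) n]

theorem le_cubePr_sqrt_le_signSum {B : Finset (Fin n)} {a : Fin n → ℝ}
    (hB : 0 < ∑ i ∈ B, a i ^ 2) {θ : ℝ} (hθ₀ : 0 ≤ θ) (hθ₁ : θ ≤ 1) :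
    (1 - θ) ^ 2 / 6 ≤ cubePr n (fun x => √(θ * ∑ i ∈ B, a i ^ 2) ≤ signSum B a x) := by
  set w := ∑ i ∈ B, a i ^ 2
  set Y := signSum B a
  have hN : (Fintype.card (Fin n → Bool) : ℝ) = 2 ^ n := by simp
  have h2 : ∑ x, Y x ^ 2 = 2 ^ n * w := sum_signSum_sq B a
  have h4 : ∑ x, (Y x ^ 2) ^ 2 ≤ 3 * 2 ^ n * w ^ 2 := by
    simpa only [← pow_mul] using sum_signSum_pow_four_le B a
  have hpz := sq_sum_sub_le_card_mul_sum_sq (fun x => Y x ^ 2) (t := θ * w) (by positivity)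
    (by rw [hN, h2]; nlinarith [mul_nonneg (sub_nonneg.2 hθ₁) hB.le, pow_pos (two_pos (α := ℝ)) n])
  have hsym := card_sq_le_sq_le_two_mul_card (flipOn_involutive B) (signSum_flipOn B a)
    (Real.sqrt_nonneg (θ * w))
  rw [Real.sq_sqrt (by positivity)] at hsym
  rw [hN, h2] at hpz
  rw [cubePr_eq_card_div, le_div_iff₀ (by positivity)]
  have hC : (1 - θ) ^ 2 * 2 ^ n ≤ 3 * #{x | θ * w ≤ Y x ^ 2} := by
    refine le_of_mul_le_mul_right (a := 2 ^ n * w ^ 2) ?_ (by positivity)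
    nlinarith [mul_le_mul_of_nonneg_left h4 (Nat.cast_nonneg #{x | θ * w ≤ Y x ^ 2} : (0 : ℝ) ≤ _)]
  have hsym' : (#{x | θ * w ≤ Y x ^ 2} : ℝ) ≤ 2 * #{x | √(θ * w) ≤ Y x} := by
    exact_mod_cast hsym
  linarith

theorem cubePr_and_eq_mul {B : Finset (Fin n)} {p q : (Fin n → Bool) → Prop}
    (hp : DependsOn p B) (hq : DependsOn q (↑B)ᶜ) :
    cubePr n (fun x => p x ∧ q x) = cubePr n p * cubePr n q := by
  have swap : ∀ x y : Fin n → Bool, B.piecewise (B.piecewise x y) (B.piecewise y x) = x := by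
    intro x y; ext i; by_cases hi : i ∈ B <;> simp [hi]
  have hcard : #{x | p x} * #{x | q x} = #{x | p x ∧ q x} * 2 ^ n := by
    rw [← card_product, show 2 ^ n = #(univ : Finset (Fin n → Bool)) by simp, ← card_product]
    refine card_nbij' (fun z => (B.piecewise z.1 z.2, B.piecewise z.2 z.1))
      (fun z => (B.piecewise z.1 z.2, B.piecewise z.2 z.1)) ?_ ?_ ?_ ?_
    · rintro ⟨x, y⟩ h
      simp only [coe_product, coe_filter, coe_univ, mem_univ, true_and, Set.mem_prod,
        Set.mem_ofPred_eq, Set.mem_univ, and_true] at h ⊢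
      exact ⟨(hp (x := B.piecewise x y) fun i hi => piecewise_eq_of_mem _ _ _ hi).mpr h.1,
        (hq (x := B.piecewise x y) fun i hi => piecewise_eq_of_notMem _ _ _ hi).mpr h.2⟩
    · rintro ⟨z, v⟩ h
      simp only [coe_product, coe_filter, coe_univ, mem_univ, true_and, Set.mem_prod,
        Set.mem_ofPred_eq, Set.mem_univ, and_true] at h ⊢
      exact ⟨(hp (x := B.piecewise z v) fun i hi => piecewise_eq_of_mem _ _ _ hi).mpr h.1,
        (hq (x := B.piecewise v z) fun i hi => piecewise_eq_of_notMem _ _ _ hi).mpr h.2⟩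
    all_goals exact fun z _ => Prod.ext (swap _ _) (swap _ _)
  rw [cubePr_eq_card_div, cubePr_eq_card_div, cubePr_eq_card_div, div_mul_div_comm,
    ← Nat.cast_mul, hcard]
  push_cast
  field_simp

theorem cubePr_forall_mem_eq_prod (P : Finset (Finset (Fin n)))
    (hP : (P : Set (Finset (Fin n))).PairwiseDisjoint id)
    {E : Finset (Fin n) → (Fin n → Bool) → Prop} (hE : ∀ B ∈ P, DependsOn (E B) B) :
    cubePr n (fun x => ∀ B ∈ P, E B x) = ∏ B ∈ P, cubePr n (E B) := by
  induction P using Finset.induction_on with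
  | empty => simp [cubePr]
  | @insert B P hB ih =>
    have hdisj : ∀ C ∈ P, Disjoint B C := fun C hC =>
      hP (by simp) (by simp [hC]) (ne_of_mem_of_not_mem hC hB).symm
    rw [prod_insert hB, ← ih (hP.subset (by simp)) fun C hC => hE C (mem_insert_of_mem hC)]
    simp only [forall_mem_insert]
    refine cubePr_and_eq_mul (hE B (mem_insert_self B P)) fun x y hxy => ?_
    exact propext <| forall₂_congr fun C hC => (hE C (mem_insert_of_mem hC)
      fun i hi => hxy i (disjoint_right.1 (hdisj C hC) hi)).to_iff

end Cube

theorem four_mul_sqrt_mul_lt_sqrt {k w : ℝ} (hk : 0 < k) (hw : 0 < w)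
    (hwk : w ≤ 9 / (256 * k)) : 4 * √k * w < √(5 / 8 * w) := by
  rw [Real.lt_sqrt (by positivity), mul_pow, mul_pow, Real.sq_sqrt hk.le]
  have hkw : k * w ≤ 9 / 256 := by
    rw [le_div_iff₀ (by positivity)] at hwk
    linarith
  nlinarith

theorem lt_lin_of_forall_mem_parts {n : ℕ} {k : ℝ} (hk : 0 < k) {a : Fin n → ℝ}
    (ha : ∑ i, a i ^ 2 = 1) (P : Finpartition (univ : Finset (Fin n)))
    (hP : ∀ B ∈ P.parts, 0 < ∑ i ∈ B, a i ^ 2 ∧ ∑ i ∈ B, a i ^ 2 ≤ 9 / (256 * k))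
    {x : Fin n → Bool} (hx : ∀ B ∈ P.parts, √(5 / 8 * ∑ i ∈ B, a i ^ 2) ≤ signSum B a x) :
    4 * √k < lin n a x := by
  have hne : P.parts.Nonempty :=
    nonempty_of_sum_ne_zero (f := fun B => ∑ i ∈ B, a i ^ 2) (by rw [P.sum_sum_parts, ha]; simp)
  calc 4 * √k = ∑ B ∈ P.parts, 4 * √k * ∑ i ∈ B, a i ^ 2 := by
        rw [← mul_sum, P.sum_sum_parts, ha, mul_one]
    _ < ∑ B ∈ P.parts, √(5 / 8 * ∑ i ∈ B, a i ^ 2) :=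
        sum_lt_sum_of_nonempty hne fun B hB => four_mul_sqrt_mul_lt_sqrt hk (hP B hB).1 (hP B hB).2
    _ ≤ ∑ B ∈ P.parts, signSum B a x := sum_le_sum hx
    _ = lin n a x := P.sum_sum_parts _

theorem two_zpow_neg_lt_pow {k : ℕ} (hk : k ≠ 0) :
    (2 : ℝ) ^ (-(999 * (k : ℤ))) < (3 / 128) ^ (64 * k) := calc
  (2 : ℝ) ^ (-(999 * (k : ℤ))) < 2 ^ (-(384 * (k : ℤ))) := zpow_lt_zpow_right₀ one_lt_two (by omega)
  _ = (1 / 64) ^ (64 * k) := by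
    rw [zpow_neg, show 384 * (k : ℤ) = ((6 * (64 * k) : ℕ) : ℤ) by push_cast; ring, zpow_natCast,
      pow_mul, one_div, inv_pow]
    norm_num
  _ ≤ (3 / 128) ^ (64 * k) := pow_le_pow_left₀ (by norm_num) (by norm_num) _

theorem sq_le_of_abs_le_one_div {x c : ℝ} (hc : 0 ≤ c) (hx : |x| ≤ 1 / (16 * √c)) :
    x ^ 2 ≤ 1 / (256 * c) := calc
  x ^ 2 = |x| ^ 2 := (sq_abs x).symm
  _ ≤ (1 / (16 * √c)) ^ 2 := pow_le_pow_left₀ (abs_nonneg x) hx 2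
  _ = 1 / (256 * c) := by rw [div_pow, mul_pow, Real.sq_sqrt hc]; norm_num

/-- **Anti-concentration for Rademacher sums with small weights.** If `∑ aᵢ² = 1`
and `maxᵢ |aᵢ| ≤ 1/(16√k)` for `k ≥ 1`, then `Pr[∑ aᵢxᵢ > 4√k] > 2^{-999k}`. -/
theorem rademacher_tail_lower_bound (n k : ℕ) (hk : 1 ≤ k) (a : Fin n → ℝ)
    (h2 : (∑ i, (a i) ^ 2) = 1)
    (hmax : ∀ i, |a i| ≤ 1 / (16 * Real.sqrt k)) :
    (2 : ℝ) ^ (-(999 * (k : ℤ))) < cubePr n (fun x => 4 * Real.sqrt k < lin n a x) := by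
  have hk₁ : (1 : ℝ) ≤ k := by exact_mod_cast hk
  have hau (i : Fin n) : a i ^ 2 ≤ 1 / (256 * k) := sq_le_of_abs_le_one_div (by linarith) (hmax i)
  obtain ⟨P, hP⟩ := exists_finpartition_sum_mem_Icc (fun i => a i ^ 2) (c := 4 / (256 * k))
    (by positivity) (by positivity) univ (fun i _ => hau i)
    (by rw [h2, div_le_one (by positivity)]; linarith)
  have hcard : #P.parts ≤ 64 * k := by
    have := P.card_parts_mul_le_sum _ fun B hB => (hP B hB).1
    rw [h2, mul_div_assoc', div_le_one (by positivity)] at this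
    exact_mod_cast (by linarith : (#P.parts : ℝ) ≤ 64 * k)
  set E := fun (B : Finset (Fin n)) x => √(5 / 8 * ∑ i ∈ B, a i ^ 2) ≤ signSum B a x
  have hpos : ∀ B ∈ P.parts, 0 < ∑ i ∈ B, a i ^ 2 := fun B hB =>
    (by positivity : (0 : ℝ) < 4 / (256 * k)).trans_le (hP B hB).1
  calc (2 : ℝ) ^ (-(999 * (k : ℤ))) < (3 / 128) ^ (64 * k) := two_zpow_neg_lt_pow (by omega)
    _ ≤ (3 / 128) ^ #P.parts := pow_le_pow_of_le_one (by norm_num) (by norm_num) hcard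
    _ ≤ ∏ B ∈ P.parts, cubePr n (E B) := by
        rw [← prod_const]
        refine prod_le_prod (fun _ _ => by norm_num) fun B hB => ?_
        exact (by norm_num : (3 : ℝ) / 128 = (1 - 5 / 8) ^ 2 / 6).trans_le
          (le_cubePr_sqrt_le_signSum (hpos B hB) (by norm_num) (by norm_num))
    _ = cubePr n (fun x => ∀ B ∈ P.parts, E B x) :=
        (cubePr_forall_mem_eq_prod P.parts P.disjoint fun B _ x y hxy => by
          simp only [E, dependsOn_signSum B a hxy]).symm
    _ ≤ cubePr n (fun x => 4 * √k < lin n a x) := cubePr_mono fun x hx =>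
        lt_lin_of_forall_mem_parts (by linarith) h2 P
          (fun B hB => ⟨hpos B hB, (hP B hB).2.trans_eq (by ring)⟩) hx

end
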